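/- arXiv:2601.11511 — 2 statements merged into one kernel-verified Lean document; each statement's English description precedes it below -/
import Mathlib

section
/- The image ∂Γ ⊆ {±1}^W consists exactly of those functions f : W → {±1} whose support meets V in a finite set of even cardinality and meets Ṽ in a finite set of even cardinality. -/
/-- Edges of the square lattice ℤ²: `(p, true)` is the horizontal edge from `p`
to `p + (1,0)`, `(p, false)` the vertical edge from `p` to `p + (0,1)`. -/
abbrev LatEdge := (ℤ × ℤ) × Bool

/-- The star of a vertex `v`: the 4 edges incident to `v`. -/
def vertexStar (v : ℤ × ℤ) : Finset LatEdge :=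
  {(v, true), (v, false), ((v.1 - 1, v.2), true), ((v.1, v.2 - 1), false)}

/-- The boundary of the face with lower-left corner `p`: its 4 edges. -/
def faceBdry (p : ℤ × ℤ) : Finset LatEdge :=
  {(p, true), (p, false), ((p.1, p.2 + 1), true), ((p.1 + 1, p.2), false)}

/-- `Γ`: finitely supported `ℤ/2`-valued functions on the disjoint union
`E_x ⊔ E_z` of two copies of the edge set (`Sum.inl` is the `x`-copy,
`Sum.inr` is the `z`-copy). -/
abbrev ToricΓ := (LatEdge ⊕ LatEdge) →₀ ZMod 2

/-- The boundary map `∂ : Γ → (ℤ/2)^W`, `W = V ⊔ Ṽ`: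
`∂γ(v) = Σ_{e ∋ v} γ(j_z e)` on vertices and `∂γ(ṽ) = Σ_{e ∈ ṽ} γ(j_x e)` on
faces (written additively in `ℤ/2`). -/
def toricBoundary (γ : ToricΓ) : (ℤ × ℤ) ⊕ (ℤ × ℤ) → ZMod 2
  | Sum.inl v => ∑ e ∈ vertexStar v, γ (Sum.inr e)
  | Sum.inr p => ∑ e ∈ faceBdry p, γ (Sum.inl e)

/-! Both halves of `∂` are mod-2 boundary maps of graphs: the `z`-edges feed the square lattice
on `V`, the `x`-edges its dual on `Ṽ`. An edge with distinct ends `u, v` has boundary `δ_u + δ_v`,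
so every boundary has finite support of even size. Conversely, summing `δ_u + δ_v` along a path
shows that it is a boundary whenever `u` and `v` are connected, and if `supp f` is finite of even
size then `f = ∑_{v ∈ supp f} (δ_v + δ_{v₀})` for any fixed `v₀`, since the `δ_{v₀}` cancel in
pairs. -/

open Function

section ChainBoundary

variable {α β : Type*}

lemma even_ncard_support_iff_sum_eq_zero (f : β → ZMod 2) {s : Finset β}
    (hs : support f ⊆ s) : Even (support f).ncard ↔ ∑ v ∈ s, f v = 0 := by
  classical
  have hsupp : support f = ↑(s.filter (f · ≠ 0)) := by
    ext v
    simpa using fun hv => hs hv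
  have hones : ∑ v ∈ s.filter (f · ≠ 0), f v = ∑ v ∈ s.filter (f · ≠ 0), 1 :=
    Finset.sum_congr rfl fun v hv => Fin.eq_one_of_ne_zero _ (Finset.mem_filter.mp hv).2
  rw [← ZMod.natCast_eq_zero_iff_even, hsupp, Set.ncard_coe_finset, ← Finset.sum_filter_ne_zero,
    hones, Finset.sum_const, nsmul_one]

variable (β) in
def evenSupport : AddSubgroup (β → ZMod 2) where
  carrier := {f | (support f).Finite ∧ Even (support f).ncard}
  zero_mem' := by simp
  neg_mem' := by
    rintro f ⟨hfin, heven⟩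
    simpa only [Set.mem_ofPred_eq, support_neg] using And.intro hfin heven
  add_mem' := by
    classical
    rintro f g ⟨hf, hf_even⟩ ⟨hg, hg_even⟩
    have hfs : support f ⊆ ↑(hf.toFinset ∪ hg.toFinset) := by simp
    have hgs : support g ⊆ ↑(hf.toFinset ∪ hg.toFinset) := by simp
    have hfgs := (support_add f g).trans (Set.union_subset hfs hgs)
    rw [even_ncard_support_iff_sum_eq_zero f hfs] at hf_even
    rw [even_ncard_support_iff_sum_eq_zero g hgs] at hg_even
    refine ⟨(hf.union hg).subset (support_add f g), ?_⟩
    rw [even_ncard_support_iff_sum_eq_zero (f + g) hfgs]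
    simp only [Pi.add_apply, Finset.sum_add_distrib, hf_even, hg_even, add_zero]

lemma pi_single_add_pi_single_mem_evenSupport [DecidableEq β] {u v : β} (huv : u ≠ v) :
    (Pi.single u 1 + Pi.single v 1 : β → ZMod 2) ∈ evenSupport β := by
  have hsupp : support (Pi.single u 1 + Pi.single v 1 : β → ZMod 2) = {u, v} := by
    ext w
    by_cases hwu : w = u <;> by_cases hwv : w = v <;> simp_all
  refine ⟨?_, ?_⟩ <;> rw [hsupp]
  · exact Set.toFinite _
  · rw [Set.ncard_pair huv]; exact even_two

variable (star : β → Finset α)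

def chainBoundary : (α →₀ ZMod 2) →+ (β → ZMod 2) where
  toFun c v := ∑ e ∈ star v, c e
  map_zero' := by ext; simp
  map_add' c d := by ext; simp [Finset.sum_add_distrib]

def Joins (e : α) (u v : β) : Prop :=
  u ≠ v ∧ ∀ w, e ∈ star w ↔ w = u ∨ w = v

def edgeGraph : SimpleGraph β where
  Adj u v := ∃ e, Joins star e u v
  symm := ⟨fun _ _ ⟨e, huv, he⟩ => ⟨e, huv.symm, fun w => (he w).trans or_comm⟩⟩
  loopless := ⟨fun _ ⟨_, huu, _⟩ => huu rfl⟩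

variable {star}

lemma chainBoundary_single_apply [DecidableEq α] (e : α) (b : ZMod 2) (w : β) :
    chainBoundary star (Finsupp.single e b) w = if e ∈ star w then b else 0 := by
  simp [chainBoundary, Finsupp.single_apply]

lemma chainBoundary_single_of_joins [DecidableEq β] {e : α} {u v : β} (h : Joins star e u v) :
    chainBoundary star (Finsupp.single e 1) = Pi.single u 1 + Pi.single v 1 := by
  classical
  obtain ⟨huv, hends⟩ := h
  ext w
  simp only [chainBoundary_single_apply, hends w, Pi.add_apply, Pi.single_apply]
  by_cases hwu : w = u <;> by_cases hwv : w = v <;> simp_all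

lemma chainBoundary_range_le (hjoins : ∀ e, ∃ u v, Joins star e u v) :
    (chainBoundary star).range ≤ evenSupport β := by
  classical
  rintro _ ⟨c, rfl⟩
  induction c using Finsupp.induction_linear with
  | zero => rw [map_zero]; exact zero_mem _
  | add c d hc hd => rw [map_add]; exact add_mem hc hd
  | single e b =>
    by_cases hb : b = 0
    · rw [hb, Finsupp.single_zero, map_zero]; exact zero_mem _
    · obtain ⟨u, v, h⟩ := hjoins e
      obtain rfl : b = 1 := Fin.eq_one_of_ne_zero b hb
      rw [chainBoundary_single_of_joins h]
      exact pi_single_add_pi_single_mem_evenSupport h.1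

lemma pi_single_add_pi_single_mem_range [DecidableEq β] {u v : β}
    (huv : (edgeGraph star).Reachable u v) :
    Pi.single u 1 + Pi.single v 1 ∈ (chainBoundary star).range := by
  obtain ⟨p⟩ := huv
  induction p with
  | nil => rw [ZModModule.add_self]; exact zero_mem _
  | cons hadj _ ih =>
    obtain ⟨e, he⟩ := hadj
    rw [← ZModModule.add_add_add_cancel _ (Pi.single _ 1)]
    exact add_mem ⟨_, chainBoundary_single_of_joins he⟩ ih

lemma eq_sum_pi_single_of_support [DecidableEq β] (f : β → ZMod 2) {s : Finset β}
    (hs : ↑s = support f) : f = ∑ v ∈ s, Pi.single v 1 := by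
  ext w
  rw [Finset.sum_apply, Finset.sum_pi_single]
  by_cases hw : w ∈ s
  · rw [if_pos hw]
    exact Fin.eq_one_of_ne_zero _ (mem_support.mp (hs ▸ Finset.mem_coe.mpr hw))
  · rw [if_neg hw]
    exact notMem_support.mp (hs ▸ Finset.mem_coe.not.mpr hw)

lemma evenSupport_le_range (hconn : (edgeGraph star).Connected) :
    evenSupport β ≤ (chainBoundary star).range := by
  classical
  rintro f ⟨hfin, heven⟩
  obtain ⟨v₀⟩ := hconn.nonempty
  have hcancel : ∑ _v ∈ hfin.toFinset, (Pi.single v₀ 1 : β → ZMod 2) = 0 := by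
    obtain ⟨k, hk⟩ := heven
    rw [Finset.sum_const, ← Set.ncard_eq_toFinset_card _ hfin, hk, add_nsmul,
      ZModModule.add_self]
  rw [eq_sum_pi_single_of_support f (s := hfin.toFinset) (by simp), ← add_zero (Finset.sum _ _),
    ← hcancel, ← Finset.sum_add_distrib]
  exact sum_mem fun v _ => pi_single_add_pi_single_mem_range (hconn v v₀)

theorem range_chainBoundary (hjoins : ∀ e, ∃ u v, Joins star e u v)
    (hconn : (edgeGraph star).Connected) :
    (chainBoundary star).range = evenSupport β :=
  le_antisymm (chainBoundary_range_le hjoins) (evenSupport_le_range hconn)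

end ChainBoundary

lemma connected_of_adj_add_one {G : SimpleGraph (ℤ × ℤ)}
    (hx : ∀ a b : ℤ, G.Adj (a, b) (a + 1, b)) (hy : ∀ a b : ℤ, G.Adj (a, b) (a, b + 1)) :
    G.Connected := by
  have hZ : (SimpleGraph.hasse ℤ).Connected :=
    ⟨SimpleGraph.hasse_preconnected_of_succ ℤ⟩
  refine (SimpleGraph.hasse_prod (α := ℤ) (β := ℤ) ▸ hZ.boxProd hZ).mono fun u v huv => ?_
  obtain ⟨a, b⟩ := u
  obtain ⟨c, d⟩ := v
  simp only [SimpleGraph.hasse_adj, Prod.covBy_iff, Order.covBy_iff_add_one_eq] at huv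
  rcases huv with (⟨rfl, rfl⟩ | ⟨rfl, rfl⟩) | ⟨rfl, rfl⟩ | ⟨rfl, rfl⟩
  exacts [hx a b, hy a b, (hx c d).symm, (hy c d).symm]

lemma joins_vertexStar_right (a b : ℤ) : Joins vertexStar ((a, b), true) (a, b) (a + 1, b) :=
  ⟨by simp, fun w => by simp [vertexStar, Prod.ext_iff]; omega⟩

lemma joins_vertexStar_up (a b : ℤ) : Joins vertexStar ((a, b), false) (a, b) (a, b + 1) :=
  ⟨by simp, fun w => by simp [vertexStar, Prod.ext_iff]; omega⟩

lemma joins_faceBdry_up (a b : ℤ) : Joins faceBdry ((a, b + 1), true) (a, b) (a, b + 1) :=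
  ⟨by simp, fun w => by simp [faceBdry, Prod.ext_iff]; omega⟩

lemma joins_faceBdry_right (a b : ℤ) : Joins faceBdry ((a + 1, b), false) (a, b) (a + 1, b) :=
  ⟨by simp, fun w => by simp [faceBdry, Prod.ext_iff]; omega⟩

theorem range_chainBoundary_vertexStar :
    (chainBoundary vertexStar).range = evenSupport (ℤ × ℤ) := by
  refine range_chainBoundary ?_ (connected_of_adj_add_one
    (fun a b => ⟨_, joins_vertexStar_right a b⟩) (fun a b => ⟨_, joins_vertexStar_up a b⟩))
  rintro ⟨⟨a, b⟩, _ | _⟩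
  exacts [⟨_, _, joins_vertexStar_up a b⟩, ⟨_, _, joins_vertexStar_right a b⟩]

theorem range_chainBoundary_faceBdry :
    (chainBoundary faceBdry).range = evenSupport (ℤ × ℤ) := by
  refine range_chainBoundary ?_ (connected_of_adj_add_one
    (fun a b => ⟨_, joins_faceBdry_right a b⟩) (fun a b => ⟨_, joins_faceBdry_up a b⟩))
  rintro ⟨⟨a, b⟩, _ | _⟩
  · exact ⟨_, _, by simpa using joins_faceBdry_right (a - 1) b⟩
  · exact ⟨_, _, by simpa using joins_faceBdry_up a (b - 1)⟩

lemma toricBoundary_eq_sumElim (γ : ToricΓ) :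
    toricBoundary γ = Sum.elim (chainBoundary vertexStar (Finsupp.sumFinsuppEquivProdFinsupp γ).2)
      (chainBoundary faceBdry (Finsupp.sumFinsuppEquivProdFinsupp γ).1) := by
  ext (v | p) <;> rfl

lemma mem_range_toricBoundary_iff (f : (ℤ × ℤ) ⊕ (ℤ × ℤ) → ZMod 2) :
    f ∈ Set.range toricBoundary ↔
      f ∘ Sum.inl ∈ (chainBoundary vertexStar).range ∧
        f ∘ Sum.inr ∈ (chainBoundary faceBdry).range := by
  constructor
  · rintro ⟨γ, rfl⟩
    rw [toricBoundary_eq_sumElim, Sum.elim_comp_inl, Sum.elim_comp_inr]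
    exact ⟨⟨_, rfl⟩, ⟨_, rfl⟩⟩
  · rintro ⟨⟨c, hc⟩, ⟨d, hd⟩⟩
    refine ⟨Finsupp.sumFinsuppEquivProdFinsupp.symm (d, c), ?_⟩
    rw [toricBoundary_eq_sumElim, Equiv.apply_symm_apply, hc, hd, Sum.elim_comp_inl_inr]

/-- the image of `∂ : Γ → (ℤ/2)^W` consists exactly of those
functions `f : W → ℤ/2`, `W = V ⊔ Ṽ`, whose support meets the vertex set `V`
in a finite set of even cardinality and meets the face set `Ṽ` in a finite set
of even cardinality. -/
theorem toricBoundary_range :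
    Set.range toricBoundary =
      {f : (ℤ × ℤ) ⊕ (ℤ × ℤ) → ZMod 2 |
        {v | f (Sum.inl v) ≠ 0}.Finite ∧ Even {v | f (Sum.inl v) ≠ 0}.ncard ∧
        {p | f (Sum.inr p) ≠ 0}.Finite ∧ Even {p | f (Sum.inr p) ≠ 0}.ncard} := by
  ext f
  rw [mem_range_toricBoundary_iff, range_chainBoundary_vertexStar, range_chainBoundary_faceBdry]
  exact and_assoc
end

section
/- Suppose a C*-subalgebra B of a unital C*-algebra A contains, for every finite region Λ, a projection P_Λ such that P_Λ X P_Λ = c(X) P_Λ for some scalar c(X) and all X in the local algebra A_Λ (with Λ sufficiently large). Then any state ω on A satisfying ω(P_Λ) = 1 for all Λ is multiplicative on local observables in the sense ω(X) = c(X), hence uniquely determined on the dense local subalgebra; consequently there is at most one state on A with ω(P_Λ) = 1 for all Λ. -/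
lemma state_expand {A : Type*} [CStarAlgebra A] (φ : A →L[ℂ] ℂ) (a b : A) (t : ℂ) :
    φ (star (a + t • b) * (a + t • b)) =
      φ (star a * a) + (starRingEnd ℂ t) * φ (star b * a) + t * φ (star a * b)
        + (starRingEnd ℂ t * t) * φ (star b * b) := by
  have h : star (a + t • b) * (a + t • b) =
      star a * a + (starRingEnd ℂ t) • (star b * a) + t • (star a * b)
        + (starRingEnd ℂ t * t) • (star b * b) := by
    rw [star_add, star_smul]
    simp only [Complex.star_def, add_mul, mul_add, smul_mul_assoc, mul_smul_comm, smul_smul]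
    module
  rw [h]
  simp only [map_add, map_smul, smul_eq_mul]

lemma state_herm {A : Type*} [CStarAlgebra A] (φ : A →L[ℂ] ℂ)
    (hpos : ∀ a : A, ∃ r : ℝ, 0 ≤ r ∧ φ (star a * a) = r) (a b : A) :
    φ (star b * a) = starRingEnd ℂ (φ (star a * b)) := by
  obtain ⟨r0, _, h0⟩ := hpos a
  obtain ⟨r2, _, h2⟩ := hpos b
  obtain ⟨r1, _, h1⟩ := hpos (a + (1:ℂ) • b)
  obtain ⟨r3, _, h3⟩ := hpos (a + Complex.I • b)
  have e1 := state_expand φ a b 1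
  have e3 := state_expand φ a b Complex.I
  rw [h1, h0, h2] at e1
  rw [h3, h0, h2] at e3
  set α := φ (star a * b) with hα
  set β := φ (star b * a) with hβ
  simp only [map_one, one_mul, mul_one, Complex.conj_I] at e1 e3
  have him : α.im + β.im = 0 := by
    have := congrArg Complex.im e1
    simp [Complex.add_im] at this
    linarith
  have hre : α.re = β.re := by
    have := congrArg Complex.im e3
    simp [Complex.add_im, Complex.mul_im, Complex.mul_re] at this
    linarith
  apply Complex.ext
  · simpa using hre.symm
  · simp only [Complex.conj_im]
    linarith

lemma state_null {A : Type*} [CStarAlgebra A] (φ : A →L[ℂ] ℂ)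
    (hpos : ∀ a : A, ∃ r : ℝ, 0 ≤ r ∧ φ (star a * a) = r) (a : A)
    (ha : φ (star a * a) = 0) (b : A) :
    φ (star a * b) = 0 ∧ φ (star b * a) = 0 := by
  obtain ⟨r2, hr2, h2⟩ := hpos b
  set α := φ (star a * b) with hα
  have hβ : φ (star b * a) = starRingEnd ℂ α := state_herm φ hpos a b
  have hre : ∀ s : ℝ, 0 ≤ 2 * s * α.re + s ^ 2 * r2 := by
    intro s
    obtain ⟨r, hr, h⟩ := hpos (a + (s : ℂ) • b)
    have e := state_expand φ a b s
    rw [ha, h2, h, hβ, ← hα] at e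
    simp only [Complex.conj_ofReal] at e
    have := congrArg Complex.re e
    simp [Complex.add_re, Complex.mul_re, Complex.mul_im] at this
    nlinarith [hr, this, sq_nonneg s]
  have him : ∀ s : ℝ, 0 ≤ -2 * s * α.im + s ^ 2 * r2 := by
    intro s
    obtain ⟨r, hr, h⟩ := hpos (a + (Complex.I * s) • b)
    have e := state_expand φ a b (Complex.I * s)
    rw [ha, h2, h, hβ, ← hα] at e
    simp only [map_mul, Complex.conj_I, Complex.conj_ofReal] at e
    have := congrArg Complex.re e
    simp [Complex.add_re, Complex.mul_re, Complex.mul_im] at this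
    nlinarith [hr, this, sq_nonneg s]
  have key : ∀ c : ℝ, (∀ s : ℝ, 0 ≤ 2 * s * c + s ^ 2 * r2) → c = 0 := by
    intro c hc
    have hs := hc (-(c) / (r2 + 1))
    have hpos1 : (0:ℝ) < r2 + 1 := by linarith
    have e2 : 2 * (-(c) / (r2 + 1)) * c + (-(c) / (r2 + 1)) ^ 2 * r2
        = (-2 * c ^ 2 * (r2 + 1) + c ^ 2 * r2) / (r2 + 1) ^ 2 := by
      field_simp
    rw [e2] at hs
    have hb : (0:ℝ) < (r2 + 1) ^ 2 := by positivity
    have h'' : 0 ≤ -2 * c ^ 2 * (r2 + 1) + c ^ 2 * r2 := by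
      rcases div_nonneg_iff.mp hs with ⟨h, _⟩ | ⟨_, h⟩
      · exact h
      · linarith
    have hc2 : c ^ 2 ≤ 0 := by nlinarith
    have := le_antisymm hc2 (sq_nonneg c)
    exact pow_eq_zero_iff (by norm_num) |>.mp this
  have hre0 : α.re = 0 := key _ hre
  have him0 : α.im = 0 := by
    have := key (-α.im) (by intro s; have := him s; linarith)
    linarith
  have hα0 : α = 0 := Complex.ext hre0 him0
  exact ⟨hα0, by rw [hβ, hα0]; simp⟩

/-- let `A` be a unital C*-algebra with an increasing net of
subalgebras `A_i` with dense union, and projections `P_i ∈ A` with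
`P_j ≤ P_i` for `i ≤ j` (regions increase along `ι`), satisfying the
LTQO-type condition: for each `X ∈ A_i` there are `j ≥ i` and a scalar `c`
with `P_j X P_j = c • P_j`.  Then any state `φ` with `φ(P_i) = 1` for all `i`
satisfies `φ(X) = c` for every such local `X`, and consequently there is at
most one state with `φ(P_i) = 1` for all `i`. -/
theorem ltqo_unique_state {A : Type*} [CStarAlgebra A] [PartialOrder A]
    [StarOrderedRing A] {ι : Type*} [Preorder ι]
    (hdir : ∀ i j : ι, ∃ k, i ≤ k ∧ j ≤ k)
    (Asub : ι → Subalgebra ℂ A) (hmono : Monotone Asub)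
    (hdense : Dense (⋃ i, (Asub i : Set A)))
    (P : ι → A) (hidem : ∀ i, P i * P i = P i) (hsa : ∀ i, star (P i) = P i)
    (hPmono : ∀ i j, i ≤ j → P j ≤ P i)
    (hLTQO : ∀ i, ∀ X ∈ Asub i, ∃ j, i ≤ j ∧ ∃ c : ℂ, P j * X * P j = c • P j)
    (φ ψ : A →L[ℂ] ℂ)
    (hφ1 : φ 1 = 1) (hψ1 : ψ 1 = 1)
    (hφpos : ∀ a : A, ∃ r : ℝ, 0 ≤ r ∧ φ (star a * a) = r)
    (hψpos : ∀ a : A, ∃ r : ℝ, 0 ≤ r ∧ ψ (star a * a) = r)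
    (hφP : ∀ i, φ (P i) = 1) (hψP : ∀ i, ψ (P i) = 1) :
    (∀ i, ∀ X ∈ Asub i, ∀ j, i ≤ j → ∀ c : ℂ,
      P j * X * P j = c • P j → φ X = c) ∧
    φ = ψ := by
  -- main compression lemma, for any state
  have main : ∀ χ : A →L[ℂ] ℂ, χ 1 = 1 →
      (∀ a : A, ∃ r : ℝ, 0 ≤ r ∧ χ (star a * a) = r) →
      (∀ i, χ (P i) = 1) →
      ∀ (j : ι) (X : A) (c : ℂ), P j * X * P j = c • P j → χ X = c := by
    intro χ hχ1 hχpos hχP j X c hc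
    set Q : A := 1 - P j with hQ
    have hQsa : star Q = Q := by
      rw [hQ, star_sub, star_one, hsa]
    have hQQ : star Q * Q = Q := by
      rw [hQsa, hQ]
      noncomm_ring
      simp [hidem j]
      noncomm_ring
    have hχQ : χ (star Q * Q) = 0 := by
      rw [hQQ, hQ, map_sub, hχ1, hχP j]
      ring
    have hnull := state_null χ hχpos Q hχQ
    have hdecomp : X = P j * X * P j + (P j * X) * Q + Q * (X * P j) + Q * (X * Q) := by
      rw [hQ]
      noncomm_ring
    have h1 : χ ((P j * X) * Q) = 0 := by
      have := (hnull (star (P j * X))).2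
      rwa [star_star] at this
    have h2 : χ (Q * (X * P j)) = 0 := by
      have := (hnull (X * P j)).1
      rwa [hQsa] at this
    have h3 : χ (Q * (X * Q)) = 0 := by
      have := (hnull (X * Q)).1
      rwa [hQsa] at this
    calc χ X = χ (P j * X * P j + (P j * X) * Q + Q * (X * P j) + Q * (X * Q)) := by
              rw [← hdecomp]
      _ = χ (P j * X * P j) := by rw [map_add, map_add, map_add, h1, h2, h3]; ring
      _ = c * χ (P j) := by rw [hc, map_smul]; rfl
      _ = c := by rw [hχP j]; ring
  refine ⟨fun i X _ j _ c hc => main φ hφ1 hφpos hφP j X c hc, ?_⟩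
  have hagree : Set.EqOn φ ψ (⋃ i, (Asub i : Set A)) := by
    intro x hx
    obtain ⟨s, ⟨i, rfl⟩, hxs⟩ := hx
    obtain ⟨j, hij, c, hc⟩ := hLTQO i x hxs
    rw [main φ hφ1 hφpos hφP j x c hc, main ψ hψ1 hψpos hψP j x c hc]
  exact ContinuousLinearMap.coeFn_injective
    (Continuous.ext_on hdense φ.continuous ψ.continuous hagree)
end
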